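/- Let Φ be a quantum channel and Q⊥ the orthogonal projection onto the orthogonal complement of H₀ = range 𝒫(𝕀), where 𝒫 is the Cesàro projection. Then for all n, tr(Q⊥ Φ^{n+1}(𝕀) Q⊥) ≤ tr(Q⊥ Φⁿ(𝕀) Q⊥). -/

import Mathlib

/-!
In the Heisenberg picture `tr (Q Φ(X) Q) = tr (Φ†(Q) X)` for the projection `Q` onto `H₀⊥`, so it
suffices to show `Φ†(Q) ≤ Q`. Positivity and unitality of `Φ†` give `0 ≤ Φ†(Q) ≤ 1`. The Cesàro
limit `σ = 𝒫(𝕀)` is a positive fixed point of `Φ` with range `H₀`, hence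
`tr (Φ†(Q) σ) = tr (Q σ) = 0`, which for positive matrices forces `Φ†(Q) σ = 0`. Thus `Φ†(Q)`
vanishes on `H₀`, i.e. `Φ†(Q) = Q Φ†(Q) Q ≤ Q`.
-/

open Matrix
open scoped ComplexOrder

/-- The algebra of `d × d` complex matrices. -/
abbrev Mat (d : ℕ) := Matrix (Fin d) (Fin d) ℂ

/-- A linear map on matrices is positive if it maps positive semidefinite matrices to
positive semidefinite matrices. -/
def IsPositiveMap {d : ℕ} (Φ : Module.End ℂ (Mat d)) : Prop :=
  ∀ X : Mat d, X.PosSemidef → (Φ X).PosSemidef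

/-- A linear map on matrices is trace-preserving. -/
def IsTracePreserving {d : ℕ} (Φ : Module.End ℂ (Mat d)) : Prop :=
  ∀ X : Mat d, (Φ X).trace = X.trace

/-- The block-wise application `(Φ ⊗ id_n)(X)` of `Φ` to a matrix on `ℂ^d ⊗ ℂ^n`. -/
def blockApply {d : ℕ} (Φ : Module.End ℂ (Mat d)) (n : ℕ)
    (X : Matrix (Fin d × Fin n) (Fin d × Fin n) ℂ) :
    Matrix (Fin d × Fin n) (Fin d × Fin n) ℂ :=
  Matrix.of fun p q => Φ (Matrix.of fun i j => X (i, p.2) (j, q.2)) p.1 q.1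

/-- Complete positivity: `Φ ⊗ id_n` is positive for every `n`. -/
def IsCompletelyPositive {d : ℕ} (Φ : Module.End ℂ (Mat d)) : Prop :=
  ∀ (n : ℕ) (X : Matrix (Fin d × Fin n) (Fin d × Fin n) ℂ),
    X.PosSemidef → (blockApply Φ n X).PosSemidef

/-- The attractor (peripheral) subspace: the span of eigenvectors corresponding to
eigenvalues of modulus one. -/
noncomputable def attrSubspace {d : ℕ} (Φ : Module.End ℂ (Mat d)) : Submodule ℂ (Mat d) :=
  ⨆ (μ : ℂ) (_ : ‖μ‖ = 1), Module.End.eigenspace Φ μ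

open Filter Topology
open scoped MatrixOrder

namespace Matrix
variable {n 𝕜 : Type*} [Fintype n] [RCLike 𝕜]

lemma PosSemidef.exists_eq_conjTranspose_mul_self {A : Matrix n n 𝕜} (hA : A.PosSemidef) :
    ∃ X : Matrix n n 𝕜, A = Xᴴ * X := by
  classical
  refine ⟨CFC.sqrt A, ?_⟩
  rw [(CFC.sqrt_nonneg A).posSemidef.isHermitian.eq, CFC.sqrt_mul_sqrt_self A hA.nonneg]

lemma trace_conjTranspose_mul_self_mul_conjTranspose_mul_self (X Y : Matrix n n 𝕜) :
    (Xᴴ * X * (Yᴴ * Y)).trace = ((Y * Xᴴ)ᴴ * (Y * Xᴴ)).trace := by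
  rw [conjTranspose_mul, conjTranspose_conjTranspose, Matrix.mul_assoc, trace_mul_comm]
  simp only [Matrix.mul_assoc]

lemma PosSemidef.trace_mul_nonneg {A B : Matrix n n 𝕜} (hA : A.PosSemidef) (hB : B.PosSemidef) :
    0 ≤ (A * B).trace := by
  obtain ⟨X, rfl⟩ := hA.exists_eq_conjTranspose_mul_self
  obtain ⟨Y, rfl⟩ := hB.exists_eq_conjTranspose_mul_self
  rw [trace_conjTranspose_mul_self_mul_conjTranspose_mul_self]
  exact (posSemidef_conjTranspose_mul_self _).trace_nonneg

lemma PosSemidef.mul_eq_zero_of_trace_mul_eq_zero {A B : Matrix n n 𝕜} (hA : A.PosSemidef)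
    (hB : B.PosSemidef) (h : (A * B).trace = 0) : A * B = 0 := by
  obtain ⟨X, rfl⟩ := hA.exists_eq_conjTranspose_mul_self
  obtain ⟨Y, rfl⟩ := hB.exists_eq_conjTranspose_mul_self
  rw [trace_conjTranspose_mul_self_mul_conjTranspose_mul_self,
    trace_conjTranspose_mul_self_eq_zero_iff] at h
  have hXY : X * Yᴴ = 0 := by simpa using congrArg (fun M => Mᴴ) h
  rw [Matrix.mul_assoc, ← Matrix.mul_assoc X, hXY, Matrix.zero_mul, Matrix.mul_zero]

lemma trace_mul_le_trace_mul_of_le {A B X : Matrix n n 𝕜} (hAB : A ≤ B) (hX : X.PosSemidef) :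
    (A * X).trace ≤ (B * X).trace := by
  have := (le_iff.mp hAB).trace_mul_nonneg hX
  rwa [Matrix.sub_mul, trace_sub, sub_nonneg] at this

lemma mul_eq_zero_of_range_le {l m : Type*} [Fintype m] {R : Type*} [CommSemiring R]
    {A : Matrix l m R} {B C : Matrix m m R} (hAB : A * B = 0)
    (hCB : LinearMap.range C.mulVecLin ≤ LinearMap.range B.mulVecLin) : A * C = 0 := by
  refine ext_iff_mulVec.mpr fun v => ?_
  obtain ⟨w, hw⟩ := hCB ⟨v, rfl⟩
  rw [mulVecLin_apply, mulVecLin_apply] at hw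
  rw [zero_mulVec, ← mulVec_mulVec, ← hw, mulVec_mulVec, hAB, zero_mulVec]

lemma isClosed_setOf_posSemidef : IsClosed {A : Matrix n n 𝕜 | A.PosSemidef} := by
  simp only [posSemidef_iff_dotProduct_mulVec, Set.ofPred_and, Set.ofPred_forall]
  refine (isClosed_eq continuous_id.matrix_conjTranspose continuous_id).inter
    (isClosed_iInter fun x => isClosed_le continuous_const ?_)
  fun_prop

end Matrix

lemma IsStarProjection.le_of_mul_one_sub_eq_zero {R : Type*} [Ring R] [PartialOrder R]
    [StarRing R] [StarOrderedRing R] {p b : R} (hp : IsStarProjection p) (hb : IsSelfAdjoint b)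
    (hb1 : b ≤ 1) (h : b * (1 - p) = 0) : b ≤ p := by
  have hbp : b * p = b := by rwa [mul_sub, mul_one, sub_eq_zero, eq_comm] at h
  have hpb : p * b = b := by
    simpa [hb.star_eq, hp.isSelfAdjoint.star_eq] using congrArg star hbp
  calc b = p * b * p := by rw [hpb, hbp]
    _ ≤ p * 1 * p := IsSelfAdjoint.conjugate_le_conjugate hb1 hp.isSelfAdjoint
    _ = p := by rw [mul_one, hp.isIdempotentElem.eq]

lemma Module.End.apply_sum_Icc_pow_apply {R M : Type*} [Semiring R] [AddCommGroup M] [Module R M]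
    (T : Module.End R M) (x : M) (N : ℕ) :
    T ((∑ n ∈ Finset.Icc 1 N, T ^ n) x) = (∑ n ∈ Finset.Icc 1 (N + 1), T ^ n) x - T x := by
  induction N with
  | zero => simp
  | succ N ih =>
    rw [Finset.sum_Icc_succ_top (by omega), LinearMap.add_apply, map_add, ih,
      Finset.sum_Icc_succ_top (by omega : 1 ≤ N + 1 + 1), LinearMap.add_apply, pow_succ' T (N + 1),
      Module.End.mul_apply]
    abel

theorem Module.End.apply_eq_self_of_tendsto_cesaro {𝕜 E : Type*} [RCLike 𝕜]
    [AddCommGroup E] [Module 𝕜 E] [TopologicalSpace E] [IsTopologicalAddGroup E]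
    [ContinuousSMul 𝕜 E] [T2Space E] {T : Module.End 𝕜 E} (hT : Continuous T) {x y : E}
    (h : Tendsto (fun N : ℕ => (N : 𝕜)⁻¹ • (∑ n ∈ Finset.Icc 1 N, T ^ n) x) atTop (𝓝 y)) :
    T y = y := by
  set S : ℕ → E := fun N => (∑ n ∈ Finset.Icc 1 N, T ^ n) x
  have hinv := tendsto_inv_atTop_nhds_zero_nat (𝕜 := 𝕜)
  have hratio : Tendsto (fun N : ℕ => (N : 𝕜)⁻¹ * (N + 1)) atTop (𝓝 1) := by
    have := (tendsto_const_nhds (x := (1 : 𝕜))).add hinv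
    rw [add_zero] at this
    refine this.congr' ?_
    filter_upwards [eventually_ne_atTop 0] with N hN
    field_simp
  -- `T` shifts the `N`-th Cesàro sum to the `(N + 1)`-st one, up to the boundary term `T x`.
  have hshift : ∀ N : ℕ, T ((N : 𝕜)⁻¹ • S N) =
      ((N : 𝕜)⁻¹ * (N + 1)) • (((N + 1 : ℕ) : 𝕜)⁻¹ • S (N + 1)) - (N : 𝕜)⁻¹ • T x := by
    intro N
    rw [map_smul, Module.End.apply_sum_Icc_pow_apply, smul_sub, smul_smul, mul_assoc, Nat.cast_succ,
      mul_inv_cancel₀ (Nat.cast_add_one_ne_zero N), mul_one]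
  have hlim := (hratio.smul (h.comp (tendsto_add_atTop_nat 1))).sub (hinv.smul_const (T x))
  rw [one_smul, zero_smul, sub_zero] at hlim
  exact tendsto_nhds_unique ((hT.tendsto y).comp h) (hlim.congr fun N => (hshift N).symm)

variable {d : ℕ} {Φ : Module.End ℂ (Mat d)}

lemma IsCompletelyPositive.isPositiveMap (hΦ : IsCompletelyPositive Φ) : IsPositiveMap Φ := by
  intro X hX
  have heq : Φ X = (blockApply Φ 1 (X.submatrix Prod.fst Prod.fst)).submatrix
      (fun i => (i, 0)) (fun i => (i, 0)) := by
    ext i j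
    simp only [submatrix_apply, blockApply, of_apply]
    congr 1
  rw [heq]
  exact (hΦ 1 _ (hX.submatrix _)).submatrix _

lemma IsPositiveMap.pow (hΦ : IsPositiveMap Φ) (k : ℕ) : IsPositiveMap (Φ ^ k) := by
  induction k with
  | zero => exact fun X hX => by simpa using hX
  | succ k ih => exact fun X hX => by rw [pow_succ', Module.End.mul_apply]; exact hΦ _ (ih X hX)

lemma IsPositiveMap.map_conjTranspose (hΦ : IsPositiveMap Φ) (X : Mat d) : Φ Xᴴ = (Φ X)ᴴ :=
  map_star (PositiveLinearMap.mk₀ Φ fun X hX => (hΦ X hX.posSemidef).nonneg) X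

lemma IsPositiveMap.posSemidef_of_tendsto_cesaro (hΦ : IsPositiveMap Φ) {X Y : Mat d}
    (hX : X.PosSemidef)
    (h : Tendsto (fun N : ℕ => (N : ℂ)⁻¹ • (∑ n ∈ Finset.Icc 1 N, Φ ^ n) X) atTop (𝓝 Y)) :
    Y.PosSemidef := by
  refine isClosed_setOf_posSemidef.mem_of_tendsto h (Eventually.of_forall fun N => ?_)
  rw [LinearMap.sum_apply]
  exact (posSemidef_sum _ fun k _ => hΦ.pow k X hX).smul (by simp)

/-- The Heisenberg-picture map `Φ†`, adjoint to `Φ` for the pairing `(Y, X) ↦ tr (Y X)`. -/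
def traceDual (Φ : Module.End ℂ (Mat d)) : Module.End ℂ (Mat d) where
  toFun Y := of fun a b => (Y * Φ (single b a 1)).trace
  map_add' Y Z := by ext; simp [Matrix.add_mul]
  map_smul' c Y := by ext; simp

lemma trace_traceDual_mul (Φ : Module.End ℂ (Mat d)) (Y X : Mat d) :
    (traceDual Φ Y * X).trace = (Y * Φ X).trace := by
  have hsingle : ∀ i j, single i j (X i j) = X i j • single i j (1 : ℂ) := by simp
  conv_rhs => rw [matrix_eq_sum_single X]
  simp only [hsingle, map_sum, map_smul, Matrix.mul_sum, Matrix.mul_smul, trace_sum, trace_smul,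
    smul_eq_mul]
  rw [trace, Finset.sum_comm]
  simp only [diag_apply, mul_apply]
  refine Finset.sum_congr rfl fun i _ => Finset.sum_congr rfl fun j _ => ?_
  simp [traceDual, mul_comm]

lemma IsTracePreserving.traceDual_one (hΦ : IsTracePreserving Φ) : traceDual Φ 1 = 1 :=
  ext_iff_trace_mul_right.mpr fun X => by
    rw [trace_traceDual_mul, Matrix.one_mul, Matrix.one_mul, hΦ]

lemma isPositiveMap_traceDual (hΦ : IsPositiveMap Φ) : IsPositiveMap (traceDual Φ) := by
  intro Y hY
  refine PosSemidef.of_dotProduct_mulVec_nonneg ?_ fun x => ?_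
  · refine ext_iff_trace_mul_right.mpr fun X => ?_
    calc ((traceDual Φ Y)ᴴ * X).trace = star (Xᴴ * traceDual Φ Y).trace := by
          rw [← trace_conjTranspose, conjTranspose_mul, conjTranspose_conjTranspose]
      _ = star (Y * (Φ X)ᴴ).trace := by
          rw [trace_mul_comm, trace_traceDual_mul, hΦ.map_conjTranspose]
      _ = (Φ X * Y).trace := by
          rw [← trace_conjTranspose, conjTranspose_mul, conjTranspose_conjTranspose,
            hY.isHermitian.eq]
      _ = (traceDual Φ Y * X).trace := by rw [trace_mul_comm, trace_traceDual_mul]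
  · rw [dotProduct_comm, ← trace_vecMulVec, ← mul_vecMulVec, trace_traceDual_mul]
    exact hY.trace_mul_nonneg (hΦ _ (posSemidef_vecMulVec_self_star x))

/-- Let `Φ` be a quantum channel, `P` its Cesàro limit projection, and
`Qp` the orthogonal projection onto the orthogonal complement of `H₀ = range P(𝕀)`.
Then `n ↦ tr(Qp Φⁿ(𝕀) Qp)` is non-increasing. -/
theorem trace_Qperp_monotone
    (d : ℕ) (Φ P : Module.End ℂ (Mat d))
    (hCP : IsCompletelyPositive Φ) (hTP : IsTracePreserving Φ)
    (hlim : ∀ X : Mat d,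
      Filter.Tendsto (fun N : ℕ => (N : ℂ)⁻¹ • (∑ n ∈ Finset.Icc 1 N, Φ ^ n) X)
        Filter.atTop (nhds (P X)))
    (Qp : Mat d) (hQH : Qp.IsHermitian) (hQ2 : Qp * Qp = Qp)
    (hQker : ∀ v : Fin d → ℂ,
      Qp.mulVec v = 0 ↔ v ∈ LinearMap.range (Matrix.mulVecLin (P (1 : Mat d)))) :
    ∀ n : ℕ,
      (Qp * (Φ ^ (n + 1)) (1 : Mat d) * Qp).trace ≤
        (Qp * (Φ ^ n) (1 : Mat d) * Qp).trace := by
  have hΦ : IsPositiveMap Φ := hCP.isPositiveMap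
  have hQ : IsStarProjection Qp := ⟨hQ2, hQH⟩
  have hσ : (P 1).PosSemidef := hΦ.posSemidef_of_tendsto_cesaro PosSemidef.one (hlim 1)
  have hσ_fixed : Φ (P 1) = P 1 :=
    Module.End.apply_eq_self_of_tendsto_cesaro Φ.continuous_of_finiteDimensional (hlim 1)
  have hQσ : Qp * P 1 = 0 := ext_iff_mulVec.mpr fun v => by
    rw [← mulVec_mulVec, zero_mulVec]
    exact (hQker _).mpr ⟨v, rfl⟩
  set B := traceDual Φ Qp
  have hB : B.PosSemidef := isPositiveMap_traceDual hΦ Qp hQ.nonneg.posSemidef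
  have hB_le_one : B ≤ 1 := by
    rw [le_iff, ← hTP.traceDual_one, ← map_sub]
    exact isPositiveMap_traceDual hΦ _ hQ.one_sub_nonneg.posSemidef
  have hBσ : B * P 1 = 0 := hB.mul_eq_zero_of_trace_mul_eq_zero hσ <| by
    rw [trace_traceDual_mul, hσ_fixed, hQσ, trace_zero]
  have hB_le : B ≤ Qp := hQ.le_of_mul_one_sub_eq_zero hB.isHermitian hB_le_one <|
    mul_eq_zero_of_range_le hBσ <| by
      rintro _ ⟨v, rfl⟩
      exact (hQker _).mp <| by rw [mulVecLin_apply, mulVec_mulVec, hQ.mul_one_sub_self, zero_mulVec]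
  have h_compress : ∀ X : Mat d, (Qp * X * Qp).trace = (Qp * X).trace := fun X => by
    rw [trace_mul_cycle, hQ2]
  intro k
  calc (Qp * (Φ ^ (k + 1)) 1 * Qp).trace = (B * (Φ ^ k) 1).trace := by
        rw [h_compress, pow_succ', Module.End.mul_apply, trace_traceDual_mul]
    _ ≤ (Qp * (Φ ^ k) 1).trace := trace_mul_le_trace_mul_of_le hB_le (hΦ.pow k 1 PosSemidef.one)
    _ = (Qp * (Φ ^ k) 1 * Qp).trace := (h_compress _).symm
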